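/- Let μ ∈ ℝ, σ > 0 and t ∈ ℝ, and let γ₁ be the Borel measure on ℝ with Lebesgue density u ↦ 1{u ≥ t}. Then the expected threshold-weighted CRPS satisfies the uniform bound 0 ≤ CRPS_{γ₁}(Φ_{μ,σ²}) ≤ σ/√π; in particular, for every fixed μ and t, CRPS_{γ₁}(Φ_{μ,σ²}) → 0 as σ → 0⁺. -/

import Mathlib

open MeasureTheory ProbabilityTheory Set

noncomputable section

/-- The standard normal distribution `N(0,1)` on `ℝ`. -/
def stdNormal : Measure ℝ := gaussianReal 0 1

/-- The standard normal CDF `Φ`. -/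
def Phi (x : ℝ) : ℝ := (stdNormal (Iic x)).toReal

/-- The standard normal PDF `φ`. -/
def stdPDF (x : ℝ) : ℝ := (Real.sqrt (2 * Real.pi))⁻¹ * Real.exp (-(x ^ 2) / 2)

/-- The CDF of the normal distribution `N(μ, σ²)`: `Φ_{μ,σ²}(u) = Φ((u - μ)/σ)`. -/
def normCDF (μ σ : ℝ) (u : ℝ) : ℝ := Phi ((u - μ) / σ)

/-- The normal distribution `N(μ, σ²)` as a measure on `ℝ`. -/
def gaussMeasure (μ σ : ℝ) : Measure ℝ := gaussianReal μ ⟨σ ^ 2, sq_nonneg σ⟩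

/-- Threshold-weighted CRPS of a predictive CDF `F` at observation `y`, with weighting
measure `γ`: `∫ (F u - 1{y ≤ u})² dγ(u)`. -/
def twCRPS (γ : Measure ℝ) (F : ℝ → ℝ) (y : ℝ) : ℝ :=
  ∫ u, (F u - (Ici y).indicator (fun _ => (1 : ℝ)) u) ^ 2 ∂γ

/-- Expected threshold-weighted CRPS of the Gaussian `N(μ, σ²)` with weighting measure `γ`:
the expectation of `y ↦ CRPS_γ(Φ_{μ,σ²}, y)` for `y ∼ N(μ, σ²)`. -/
def etwCRPS (γ : Measure ℝ) (μ σ : ℝ) : ℝ :=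
  ∫ y, twCRPS γ (normCDF μ σ) y ∂(gaussMeasure μ σ)

/-- `γ₁`: the Borel measure on `ℝ` with Lebesgue density `u ↦ 1{u ≥ t}`. -/
def gamma1 (t : ℝ) : Measure ℝ :=
  volume.withDensity ((Ici t).indicator fun _ => (1 : ENNReal))

/-- `γ₂`: the Borel measure on `ℝ` with Lebesgue density `u ↦ (1/σγ) φ((u - t)/σγ)`. -/
def gamma2 (t σγ : ℝ) : Measure ℝ :=
  volume.withDensity fun u => ENNReal.ofReal (1 / σγ * stdPDF ((u - t) / σγ))

end

noncomputable section Lemmata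
open Filter

lemma stdPDF_eq : stdPDF = gaussianPDFReal 0 1 := by
  ext x
  simp [stdPDF, gaussianPDFReal, neg_div]

lemma stdPDF_nonneg (x : ℝ) : 0 ≤ stdPDF x := by
  rw [stdPDF_eq]; exact gaussianPDFReal_nonneg 0 1 x

lemma continuous_stdPDF : Continuous stdPDF := by
  unfold stdPDF; fun_prop

lemma integrable_stdPDF : Integrable stdPDF := by
  rw [stdPDF_eq]; exact integrable_gaussianPDFReal 0 1

instance : IsProbabilityMeasure stdNormal := by
  unfold stdNormal; infer_instance

lemma stdNormal_apply (s : Set ℝ) :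
    stdNormal s = ENNReal.ofReal (∫ x in s, stdPDF x) := by
  rw [stdPDF_eq, stdNormal]
  exact gaussianReal_apply_eq_integral 0 one_ne_zero s

lemma Phi_eq_integral (x : ℝ) : Phi x = ∫ u in Iic x, stdPDF u := by
  rw [Phi, stdNormal_apply, ENNReal.toReal_ofReal]
  exact integral_nonneg fun u => stdPDF_nonneg u

lemma Phi_nonneg (x : ℝ) : 0 ≤ Phi x := ENNReal.toReal_nonneg

lemma Phi_le_one (x : ℝ) : Phi x ≤ 1 := by
  rw [Phi]
  have h := prob_le_one (μ := stdNormal) (s := Iic x)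
  exact ENNReal.toReal_le_of_le_ofReal zero_le_one (by simpa using h)

lemma one_sub_Phi (x : ℝ) : 1 - Phi x = ∫ u in Ioi x, stdPDF u := by
  have h1 : (∫ u in Iic x, stdPDF u) + (∫ u in Ioi x, stdPDF u) = ∫ u, stdPDF u :=
    intervalIntegral.integral_Iic_add_Ioi integrable_stdPDF.integrableOn integrable_stdPDF.integrableOn
  have h2 : (∫ u, stdPDF u) = 1 := by
    rw [stdPDF_eq]; exact integral_gaussianPDFReal_eq_one 0 one_ne_zero
  rw [Phi_eq_integral]; linarith

lemma monotone_Phi : Monotone Phi := by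
  intro a b hab
  rw [Phi, Phi]
  exact ENNReal.toReal_mono (measure_ne_top _ _) (measure_mono (Iic_subset_Iic.2 hab))

lemma tendsto_Phi_atTop : Tendsto Phi atTop (nhds 1) := by
  have h := tendsto_measure_Iic_atTop (μ := stdNormal)
  have : Tendsto (fun x => (stdNormal (Iic x)).toReal) atTop (nhds (stdNormal univ).toReal) :=
    (ENNReal.tendsto_toReal (measure_ne_top _ _)).comp h
  exact (by simpa using this : Tendsto (fun x => (stdNormal (Iic x)).toReal) atTop (nhds 1))

lemma tendsto_Phi_atBot : Tendsto Phi atBot (nhds 0) := by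
  have h : Tendsto (stdNormal ∘ Iic) atBot (nhds (stdNormal (⋂ x : ℝ, Iic x))) :=
    tendsto_measure_iInter_atBot (fun x => (measurableSet_Iic).nullMeasurableSet)
      (fun a b hab => Iic_subset_Iic.2 hab) ⟨0, measure_ne_top _ _⟩
  have h2 : (⋂ x : ℝ, Iic x) = ∅ := by
    ext y; simp only [mem_iInter, mem_Iic, mem_empty_iff_false, iff_false, not_forall]
    exact ⟨y - 1, by simp [not_le]⟩
  rw [h2, measure_empty] at h
  have : Tendsto (fun x => (stdNormal (Iic x)).toReal) atBot (nhds (0 : ENNReal).toReal) :=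
    (ENNReal.tendsto_toReal (by simp)).comp h
  exact (by simpa using this : Tendsto (fun x => (stdNormal (Iic x)).toReal) atBot (nhds 0))

lemma hasDerivAt_Phi (x : ℝ) : HasDerivAt Phi (stdPDF x) x := by
  have key : ∀ u : ℝ, Phi u = (∫ v in (0:ℝ)..u, stdPDF v) + Phi 0 := by
    intro u
    rw [← intervalIntegral.integral_Iic_sub_Iic integrable_stdPDF.integrableOn
      integrable_stdPDF.integrableOn, Phi_eq_integral, Phi_eq_integral]
    ring
  have h : HasDerivAt (fun u => (∫ v in (0:ℝ)..u, stdPDF v) + Phi 0) (stdPDF x) x := by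
    have := intervalIntegral.integral_hasDerivAt_right (a := 0) (b := x)
      (integrable_stdPDF.intervalIntegrable)
      (continuous_stdPDF.stronglyMeasurableAtFilter _ _)
      (continuous_stdPDF.continuousAt (x := x))
    exact this.add_const _
  have heq : (fun u => (∫ v in (0:ℝ)..u, stdPDF v) + Phi 0) = Phi :=
    funext fun u => (key u).symm
  rwa [heq] at h

section Stage2

lemma measurable_Phi : Measurable Phi := monotone_Phi.measurable

lemma tail_ub {x : ℝ} (hx : 2 ≤ x) : 1 - Phi x ≤ Real.exp (-x) := by
  rw [one_sub_Phi]
  have hmono : ∀ u ∈ Ioi x, stdPDF u ≤ Real.exp (-u) := by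
    intro u hu
    have hu2 : 2 ≤ u := le_trans hx (le_of_lt hu)
    have h1 : (Real.sqrt (2 * Real.pi))⁻¹ ≤ 1 := by
      rw [inv_le_one_iff₀]
      right
      rw [show (1:ℝ) = Real.sqrt 1 by simp]
      apply Real.sqrt_le_sqrt
      nlinarith [Real.pi_gt_three]
    have h2 : Real.exp (-(u ^ 2) / 2) ≤ Real.exp (-u) := by
      apply Real.exp_le_exp.2
      nlinarith
    calc stdPDF u ≤ 1 * Real.exp (-u) := by
          exact mul_le_mul h1 h2 (Real.exp_pos _).le zero_le_one
      _ = Real.exp (-u) := one_mul _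
  have hint : IntegrableOn (fun u : ℝ => Real.exp (-u)) (Ioi x) := by
    have := exp_neg_integrableOn_Ioi x (one_pos)
    simpa using this
  calc (∫ u in Ioi x, stdPDF u) ≤ ∫ u in Ioi x, Real.exp (-u) := by
        apply setIntegral_mono_on integrable_stdPDF.integrableOn hint measurableSet_Ioi hmono
    _ = Real.exp (-x) := integral_exp_neg_Ioi x
  
lemma tail_lb {x : ℝ} (hx : x ≤ -2) : Phi x ≤ Real.exp x := by
  rw [Phi_eq_integral]
  have hmono : ∀ u ∈ Iic x, stdPDF u ≤ Real.exp u := by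
    intro u hu
    have hu2 : u ≤ -2 := le_trans hu hx
    have h1 : (Real.sqrt (2 * Real.pi))⁻¹ ≤ 1 := by
      rw [inv_le_one_iff₀]
      right
      rw [show (1:ℝ) = Real.sqrt 1 by simp]
      apply Real.sqrt_le_sqrt
      nlinarith [Real.pi_gt_three]
    have h2 : Real.exp (-(u ^ 2) / 2) ≤ Real.exp u := by
      apply Real.exp_le_exp.2
      nlinarith
    calc stdPDF u ≤ 1 * Real.exp u := mul_le_mul h1 h2 (Real.exp_pos _).le zero_le_one
      _ = Real.exp u := one_mul _
  calc (∫ u in Iic x, stdPDF u) ≤ ∫ u in Iic x, Real.exp u := by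
        apply setIntegral_mono_on integrable_stdPDF.integrableOn
          (integrableOn_exp_Iic x) measurableSet_Iic hmono
    _ = Real.exp x := integral_exp_Iic x

lemma integrable_exp_neg_abs : Integrable (fun x : ℝ => Real.exp (-|x|)) := by
  have h1 : IntegrableOn (fun x : ℝ => Real.exp (-|x|)) (Iic 0) := by
    apply IntegrableOn.congr_fun (integrableOn_exp_Iic 0) _ measurableSet_Iic
    intro u hu
    simp only [mem_Iic] at hu
    simp only [abs_of_nonpos hu, neg_neg]
  have h2 : IntegrableOn (fun x : ℝ => Real.exp (-|x|)) (Ioi 0) := by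
    apply IntegrableOn.congr_fun ?_ _ measurableSet_Ioi
    · exact fun u => Real.exp (-u)
    · have := exp_neg_integrableOn_Ioi (0:ℝ) one_pos
      simpa using this
    · intro u hu
      simp only [mem_Ioi] at hu
      simp only [abs_of_nonneg hu.le]
  have h3 := h1.union h2
  rwa [Iic_union_Ioi, integrableOn_univ] at h3

lemma g_le (x : ℝ) : Phi x * (1 - Phi x) ≤ Real.exp 2 * Real.exp (-|x|) := by
  rw [← Real.exp_add]
  rcases le_or_gt x (-2) with h | h
  · have : Phi x * (1 - Phi x) ≤ Real.exp x := by
      calc Phi x * (1 - Phi x) ≤ Phi x * 1 := by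
            apply mul_le_mul_of_nonneg_left (by linarith [Phi_nonneg x]) (Phi_nonneg x)
        _ = Phi x := mul_one _
        _ ≤ Real.exp x := tail_lb h
    refine this.trans (Real.exp_le_exp.2 ?_)
    rw [abs_of_nonpos (by linarith)]
    linarith
  rcases le_or_gt 2 x with h2 | h2
  · have : Phi x * (1 - Phi x) ≤ Real.exp (-x) := by
      calc Phi x * (1 - Phi x) ≤ 1 * (1 - Phi x) := by
            apply mul_le_mul_of_nonneg_right (Phi_le_one x) (by linarith [Phi_le_one x])
        _ = 1 - Phi x := one_mul _
        _ ≤ Real.exp (-x) := tail_ub h2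
    refine this.trans (Real.exp_le_exp.2 ?_)
    rw [abs_of_nonneg (by linarith)]
    linarith
  · have h1 : Phi x * (1 - Phi x) ≤ 1 * 1 :=
      mul_le_mul (Phi_le_one x) (by linarith [Phi_nonneg x]) (by linarith [Phi_le_one x])
        zero_le_one
    have h2 : (1:ℝ) * 1 = Real.exp 0 := by simp
    have h3 : Real.exp 0 ≤ Real.exp (2 + -|x|) :=
      Real.exp_le_exp.2 (by cases abs_cases x <;> linarith)
    linarith

lemma g_nonneg (x : ℝ) : 0 ≤ Phi x * (1 - Phi x) :=
  mul_nonneg (Phi_nonneg x) (by linarith [Phi_le_one x])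

lemma integrable_g : Integrable (fun x => Phi x * (1 - Phi x)) := by
  apply Integrable.mono' (integrable_exp_neg_abs.const_mul (Real.exp 2))
  · exact ((measurable_Phi.mul (measurable_const.sub measurable_Phi))).aestronglyMeasurable
  · refine ae_of_all _ fun x => ?_
    rw [Real.norm_eq_abs, abs_of_nonneg (g_nonneg x)]
    exact g_le x

end Stage2

section Stage3

lemma stdPDF_le_exp_neg {x : ℝ} (hx : 2 ≤ x) : stdPDF x ≤ Real.exp (-x) := by
  have h1 : (Real.sqrt (2 * Real.pi))⁻¹ ≤ 1 := by
    rw [inv_le_one_iff₀]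
    right
    rw [show (1:ℝ) = Real.sqrt 1 by simp]
    apply Real.sqrt_le_sqrt
    nlinarith [Real.pi_gt_three]
  have h2 : Real.exp (-(x ^ 2) / 2) ≤ Real.exp (-x) := Real.exp_le_exp.2 (by nlinarith)
  calc stdPDF x ≤ 1 * Real.exp (-x) := mul_le_mul h1 h2 (Real.exp_pos _).le zero_le_one
    _ = Real.exp (-x) := one_mul _

lemma stdPDF_le_exp {x : ℝ} (hx : x ≤ -2) : stdPDF x ≤ Real.exp x := by
  have h1 : (Real.sqrt (2 * Real.pi))⁻¹ ≤ 1 := by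
    rw [inv_le_one_iff₀]
    right
    rw [show (1:ℝ) = Real.sqrt 1 by simp]
    apply Real.sqrt_le_sqrt
    nlinarith [Real.pi_gt_three]
  have h2 : Real.exp (-(x ^ 2) / 2) ≤ Real.exp x := Real.exp_le_exp.2 (by nlinarith)
  calc stdPDF x ≤ 1 * Real.exp x := mul_le_mul h1 h2 (Real.exp_pos _).le zero_le_one
    _ = Real.exp x := one_mul _

lemma tendsto_stdPDF_atTop : Tendsto stdPDF atTop (nhds 0) := by
  apply squeeze_zero_norm' (a := fun x => Real.exp (-x))
  · filter_upwards [eventually_ge_atTop (2:ℝ)] with x hx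
    rw [Real.norm_eq_abs, abs_of_nonneg (stdPDF_nonneg x)]
    exact stdPDF_le_exp_neg hx
  · exact Real.tendsto_exp_neg_atTop_nhds_zero

lemma tendsto_stdPDF_atBot : Tendsto stdPDF atBot (nhds 0) := by
  apply squeeze_zero_norm' (a := Real.exp)
  · filter_upwards [eventually_le_atBot (-2:ℝ)] with x hx
    rw [Real.norm_eq_abs, abs_of_nonneg (stdPDF_nonneg x)]
    exact stdPDF_le_exp hx
  · exact Real.tendsto_exp_atBot

lemma hasDerivAt_stdPDF (x : ℝ) : HasDerivAt stdPDF (-x * stdPDF x) x := by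
  have h : HasDerivAt (fun x : ℝ => (Real.sqrt (2 * Real.pi))⁻¹ * Real.exp (-(x ^ 2) / 2))
      ((Real.sqrt (2 * Real.pi))⁻¹ * (Real.exp (-(x ^ 2) / 2) * (-(2 * x ^ 1) / 2))) x := by
    exact (((hasDerivAt_pow 2 x).neg.div_const 2).exp).const_mul _
  have heq : (fun x : ℝ => (Real.sqrt (2 * Real.pi))⁻¹ * Real.exp (-(x ^ 2) / 2)) = stdPDF := rfl
  rw [heq] at h
  convert h using 1
  unfold stdPDF
  ring

lemma key_identity (x : ℝ) :
    (Real.sqrt Real.pi)⁻¹ * (stdPDF (x * Real.sqrt 2) * Real.sqrt 2) = 2 * stdPDF x ^ 2 := by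
  unfold stdPDF
  have h2 : Real.sqrt (2 * Real.pi) = Real.sqrt 2 * Real.sqrt Real.pi :=
    Real.sqrt_mul (by norm_num) _
  have e1 : (x * Real.sqrt 2) ^ 2 = 2 * x ^ 2 := by
    rw [mul_pow, Real.sq_sqrt (by norm_num : (0:ℝ) ≤ 2)]; ring
  have e2 : Real.exp (-(x ^ 2) / 2) ^ 2 = Real.exp (-(2 * x ^ 2) / 2) := by
    rw [sq, ← Real.exp_add]; ring_nf
  rw [e1, h2, mul_pow, e2]
  have hs2 : (0:ℝ) < Real.sqrt 2 := Real.sqrt_pos.2 (by norm_num)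
  have hsp : (0:ℝ) < Real.sqrt Real.pi := Real.sqrt_pos.2 Real.pi_pos
  have hss : Real.sqrt 2 * Real.sqrt 2 = 2 := Real.mul_self_sqrt (by norm_num)
  have hpp : Real.sqrt Real.pi * Real.sqrt Real.pi = Real.pi :=
    Real.mul_self_sqrt Real.pi_pos.le
  field_simp
  linear_combination hss

noncomputable def GG (x : ℝ) : ℝ :=
  x * (Phi x * (1 - Phi x)) + stdPDF x * (1 - 2 * Phi x)
    + (Real.sqrt Real.pi)⁻¹ * Phi (x * Real.sqrt 2)

lemma hasDerivAt_GG (x : ℝ) : HasDerivAt GG (Phi x * (1 - Phi x)) x := by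
  have hΦ := hasDerivAt_Phi x
  have hφ := hasDerivAt_stdPDF x
  have h1 : HasDerivAt (fun x => x * (Phi x * (1 - Phi x)))
      (1 * (Phi x * (1 - Phi x)) + x * (stdPDF x * (1 - Phi x)
        + Phi x * (0 - stdPDF x))) x :=
    (hasDerivAt_id x).mul (hΦ.mul ((hasDerivAt_const x 1).sub hΦ))
  have h2 : HasDerivAt (fun x => stdPDF x * (1 - 2 * Phi x))
      ((-x * stdPDF x) * (1 - 2 * Phi x) + stdPDF x * (0 - 2 * stdPDF x)) x :=
    hφ.mul ((hasDerivAt_const x 1).sub ((hΦ.const_mul 2).congr_deriv rfl))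
  have h3 : HasDerivAt (fun x => (Real.sqrt Real.pi)⁻¹ * Phi (x * Real.sqrt 2))
      ((Real.sqrt Real.pi)⁻¹ * (stdPDF (x * Real.sqrt 2) * Real.sqrt 2)) x := by
    have := (hasDerivAt_Phi (x * Real.sqrt 2)).comp x
      ((hasDerivAt_id x).mul_const (Real.sqrt 2))
    exact (this.congr_deriv (by ring)).const_mul _
  have := (h1.add h2).add h3
  convert this using 1
  · rfl
  · rfl
  · rfl
  linear_combination -(key_identity x)

lemma tendsto_GG_atTop : Tendsto GG atTop (nhds ((Real.sqrt Real.pi)⁻¹)) := by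
  have t1 : Tendsto (fun x => x * (Phi x * (1 - Phi x))) atTop (nhds 0) := by
    apply squeeze_zero_norm' (a := fun x => x * Real.exp (-x))
    · filter_upwards [eventually_ge_atTop (2:ℝ)] with x hx
      rw [Real.norm_eq_abs, abs_of_nonneg (mul_nonneg (by linarith) (g_nonneg x))]
      calc x * (Phi x * (1 - Phi x)) ≤ x * (1 * (1 - Phi x)) := by
            apply mul_le_mul_of_nonneg_left _ (by linarith)
            exact mul_le_mul_of_nonneg_right (Phi_le_one x) (by linarith [Phi_le_one x])
        _ = x * (1 - Phi x) := by ring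
        _ ≤ x * Real.exp (-x) := mul_le_mul_of_nonneg_left (tail_ub hx) (by linarith)
    · have := Real.tendsto_pow_mul_exp_neg_atTop_nhds_zero 1
      simpa using this
  have t2 : Tendsto (fun x => stdPDF x * (1 - 2 * Phi x)) atTop (nhds 0) := by
    have := tendsto_stdPDF_atTop.mul
      ((tendsto_const_nhds.sub (tendsto_Phi_atTop.const_mul 2)) :
        Tendsto (fun x => 1 - 2 * Phi x) atTop (nhds (1 - 2 * 1)))
    simpa using this
  have t3 : Tendsto (fun x => (Real.sqrt Real.pi)⁻¹ * Phi (x * Real.sqrt 2)) atTop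
      (nhds ((Real.sqrt Real.pi)⁻¹ * 1)) := by
    apply Tendsto.const_mul
    apply tendsto_Phi_atTop.comp
    exact Tendsto.atTop_mul_const (Real.sqrt_pos.2 (by norm_num)) tendsto_id
  have := (t1.add t2).add t3
  exact (by simpa using this : Tendsto (fun x => x * (Phi x * (1 - Phi x)) + stdPDF x * (1 - 2 * Phi x) + (Real.sqrt Real.pi)⁻¹ * Phi (x * Real.sqrt 2)) atTop (nhds ((Real.sqrt Real.pi)⁻¹)))

lemma tendsto_GG_atBot : Tendsto GG atBot (nhds 0) := by
  have t1 : Tendsto (fun x => x * (Phi x * (1 - Phi x))) atBot (nhds 0) := by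
    apply squeeze_zero_norm' (a := fun x => -x * Real.exp x)
    · filter_upwards [eventually_le_atBot (-2:ℝ)] with x hx
      rw [Real.norm_eq_abs, abs_mul, abs_of_nonpos (by linarith),
        abs_of_nonneg (g_nonneg x)]
      calc -x * (Phi x * (1 - Phi x)) ≤ -x * (Phi x * 1) := by
            apply mul_le_mul_of_nonneg_left _ (by linarith)
            exact mul_le_mul_of_nonneg_left (by linarith [Phi_nonneg x]) (Phi_nonneg x)
        _ = -x * Phi x := by ring
        _ ≤ -x * Real.exp x := mul_le_mul_of_nonneg_left (tail_lb hx) (by linarith)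
    · have h := (Real.tendsto_pow_mul_exp_neg_atTop_nhds_zero 1).comp tendsto_neg_atBot_atTop
      have : (fun x : ℝ => -x * Real.exp x)
          = (fun x : ℝ => x ^ 1 * Real.exp (-x)) ∘ Neg.neg := by
        ext x; simp
      rwa [this]
  have t2 : Tendsto (fun x => stdPDF x * (1 - 2 * Phi x)) atBot (nhds 0) := by
    have := tendsto_stdPDF_atBot.mul
      ((tendsto_const_nhds.sub (tendsto_Phi_atBot.const_mul 2)) :
        Tendsto (fun x => 1 - 2 * Phi x) atBot (nhds (1 - 2 * 0)))
    simpa using this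
  have t3 : Tendsto (fun x => (Real.sqrt Real.pi)⁻¹ * Phi (x * Real.sqrt 2)) atBot
      (nhds ((Real.sqrt Real.pi)⁻¹ * 0)) := by
    apply Tendsto.const_mul
    apply tendsto_Phi_atBot.comp
    exact Tendsto.atBot_mul_const (Real.sqrt_pos.2 (by norm_num)) tendsto_id
  have := (t1.add t2).add t3
  exact (by simpa using this : Tendsto (fun x => x * (Phi x * (1 - Phi x)) + stdPDF x * (1 - 2 * Phi x) + (Real.sqrt Real.pi)⁻¹ * Phi (x * Real.sqrt 2)) atBot (nhds 0))

lemma integral_g : ∫ x, Phi x * (1 - Phi x) = (Real.sqrt Real.pi)⁻¹ := by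
  have hIic := integral_Iic_of_hasDerivAt_of_tendsto' (a := 0)
    (fun u _ => hasDerivAt_GG u) integrable_g.integrableOn tendsto_GG_atBot
  have hIoi := integral_Ioi_of_hasDerivAt_of_tendsto' (a := 0)
    (fun u _ => hasDerivAt_GG u) integrable_g.integrableOn tendsto_GG_atTop
  have := intervalIntegral.integral_Iic_add_Ioi (b := (0:ℝ)) (μ := volume)
    (f := fun x => Phi x * (1 - Phi x)) integrable_g.integrableOn integrable_g.integrableOn
  rw [← this, hIic, hIoi]
  ring

end Stage3

section Stage4

variable {μ σ t : ℝ}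

lemma gaussMeasure_eq_map (hσ : 0 < σ) :
    gaussMeasure μ σ = stdNormal.map (fun x => σ * x + μ) := by
  have h1 : stdNormal.map (σ * ·) = gaussianReal 0 ⟨σ ^ 2, sq_nonneg σ⟩ := by
    rw [stdNormal, gaussianReal_map_const_mul]
    congr 1
    · ring
    · exact mul_one _
  have h2 : (stdNormal.map (σ * ·)).map (· + μ) = gaussianReal μ ⟨σ ^ 2, sq_nonneg σ⟩ := by
    rw [h1]; erw [gaussianReal_map_add_const]
    congr 1
    ring
  rw [gaussMeasure, ← h2,
    Measure.map_map (measurable_add_const μ) (measurable_const_mul σ)]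
  rfl

lemma gaussMeasure_Iic (hσ : 0 < σ) (u : ℝ) :
    gaussMeasure μ σ (Iic u) = ENNReal.ofReal (normCDF μ σ u) := by
  rw [gaussMeasure_eq_map hσ,
    Measure.map_apply ((measurable_const_mul σ).add_const μ) measurableSet_Iic]
  have hpre : (fun x => σ * x + μ) ⁻¹' Iic u = Iic ((u - μ) / σ) := by
    ext x
    simp only [mem_preimage, mem_Iic, le_div_iff₀ hσ]
    constructor <;> intro h <;> nlinarith
  rw [hpre, normCDF, Phi, ENNReal.ofReal_toReal (measure_ne_top _ _)]

instance : IsProbabilityMeasure (gaussMeasure μ σ) := by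
  unfold gaussMeasure; exact instIsProbabilityMeasureGaussianReal _ _

lemma normCDF_nonneg (u : ℝ) : 0 ≤ normCDF μ σ u := Phi_nonneg _
lemma normCDF_le_one (u : ℝ) : normCDF μ σ u ≤ 1 := Phi_le_one _

lemma gaussMeasure_Ioi (hσ : 0 < σ) (u : ℝ) :
    gaussMeasure μ σ (Ioi u) = ENNReal.ofReal (1 - normCDF μ σ u) := by
  have hc : Ioi u = (Iic u)ᶜ := compl_Iic.symm
  rw [hc, prob_compl_eq_one_sub measurableSet_Iic, gaussMeasure_Iic hσ,
    ← ENNReal.ofReal_one, ← ENNReal.ofReal_sub _ (normCDF_nonneg u)]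

lemma measurable_normCDF : Measurable (normCDF μ σ) :=
  measurable_Phi.comp ((measurable_id.sub_const μ).div_const σ)

end Stage4

section Stage5

variable {μ σ t : ℝ}

noncomputable def fker (μ σ : ℝ) (y u : ℝ) : ENNReal :=
  ENNReal.ofReal ((normCDF μ σ u - (Ici y).indicator (fun _ => (1:ℝ)) u) ^ 2)

lemma indicator_eq (y u : ℝ) :
    (Ici y).indicator (fun _ => (1:ℝ)) u = if y ≤ u then 1 else 0 := by
  simp [Set.indicator_apply, mem_Ici]

lemma measurable_fker_uncurry :
    Measurable (fun p : ℝ × ℝ => fker μ σ p.1 p.2) := by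
  have h1 : Measurable fun p : ℝ × ℝ => normCDF μ σ p.2 :=
    measurable_normCDF.comp measurable_snd
  have h2 : Measurable fun p : ℝ × ℝ => (Ici p.1).indicator (fun _ => (1:ℝ)) p.2 := by
    simp_rw [indicator_eq]
    exact Measurable.ite (measurableSet_le measurable_fst measurable_snd)
      measurable_const measurable_const
  exact ENNReal.measurable_ofReal.comp ((h1.sub h2).pow_const 2)

lemma measurable_fker_right (y : ℝ) : Measurable (fun u => fker μ σ y u) := by
  have hind : Measurable fun u => (Ici y).indicator (fun _ => (1:ℝ)) u := by
    simp_rw [indicator_eq]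
    exact Measurable.ite measurableSet_Ici measurable_const measurable_const
  exact ENNReal.measurable_ofReal.comp ((measurable_normCDF.sub hind).pow_const 2)

lemma gamma1_lintegral (t : ℝ) (g : ℝ → ENNReal) (hg : Measurable g) :
    ∫⁻ u, g u ∂(gamma1 t) = ∫⁻ u in Ici t, g u := by
  rw [gamma1, lintegral_withDensity_eq_lintegral_mul _
    (measurable_const.indicator measurableSet_Ici) hg,
    ← lintegral_indicator measurableSet_Ici]
  congr 1
  ext u
  by_cases hu : u ∈ Ici t <;> simp [hu]

lemma inner_lintegral (hσ : 0 < σ) (u : ℝ) :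
    ∫⁻ y, fker μ σ y u ∂(gaussMeasure μ σ)
      = ENNReal.ofReal (normCDF μ σ u * (1 - normCDF μ σ u)) := by
  set a := normCDF μ σ u with ha
  rw [← lintegral_add_compl (fun y => fker μ σ y u) (measurableSet_Iic (a := u))]
  have h1 : ∫⁻ y in Iic u, fker μ σ y u ∂(gaussMeasure μ σ)
      = ENNReal.ofReal ((a - 1) ^ 2) * ENNReal.ofReal a := by
    rw [setLIntegral_congr_fun measurableSet_Iic
      (fun y (hy : y ∈ Iic u) => ?_), setLIntegral_const,
      gaussMeasure_Iic hσ u]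
    rw [fker, indicator_eq, if_pos (show y ≤ u from hy)]
  have h2 : ∫⁻ y in (Iic u)ᶜ, fker μ σ y u ∂(gaussMeasure μ σ)
      = ENNReal.ofReal (a ^ 2) * ENNReal.ofReal (1 - a) := by
    rw [compl_Iic]
    rw [setLIntegral_congr_fun measurableSet_Ioi
      (fun y (hy : y ∈ Ioi u) => ?_), setLIntegral_const,
      gaussMeasure_Ioi hσ u]
    rw [fker, indicator_eq, if_neg (not_le.2 (show u < y from hy)), sub_zero]
  rw [h1, h2, ← ENNReal.ofReal_mul (sq_nonneg _), ← ENNReal.ofReal_mul (sq_nonneg _),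
    ← ENNReal.ofReal_add (by nlinarith [normCDF_nonneg (μ := μ) (σ := σ) u])
      (by nlinarith [normCDF_le_one (μ := μ) (σ := σ) u])]
  congr 1
  ring

lemma integrable_normCDF_mul (hσ : 0 < σ) :
    Integrable (fun u => normCDF μ σ u * (1 - normCDF μ σ u)) := by
  have h1 : (fun u => normCDF μ σ u * (1 - normCDF μ σ u))
      = fun u => (fun x => Phi (x / σ) * (1 - Phi (x / σ))) (u - μ) := by
    ext u; rw [normCDF]
  rw [h1]
  exact (integrable_g.comp_div hσ.ne').comp_sub_right μ

lemma integral_normCDF_mul (hσ : 0 < σ) :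
    ∫ u, normCDF μ σ u * (1 - normCDF μ σ u) = σ / Real.sqrt Real.pi := by
  have h1 : (fun u => normCDF μ σ u * (1 - normCDF μ σ u))
      = fun u => (fun x => Phi (x / σ) * (1 - Phi (x / σ))) (u - μ) := by
    ext u; rw [normCDF]
  rw [h1, integral_sub_right_eq_self (fun x => Phi (x / σ) * (1 - Phi (x / σ))) μ,
    Measure.integral_comp_div (fun x => Phi x * (1 - Phi x)) σ,
    integral_g, abs_of_pos hσ, smul_eq_mul, div_eq_mul_inv]

lemma etwCRPS_nonneg (γ : Measure ℝ) : 0 ≤ etwCRPS γ μ σ :=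
  integral_nonneg fun _ => integral_nonneg fun _ => sq_nonneg _

lemma etwCRPS_le (hσ : 0 < σ) :
    etwCRPS (gamma1 t) μ σ ≤ σ / Real.sqrt Real.pi := by
  set P := gaussMeasure μ σ with hP
  set I : ℝ → ENNReal := fun y => ∫⁻ u in Ici t, fker μ σ y u with hI
  have hT : ∀ y, twCRPS (gamma1 t) (normCDF μ σ) y = (I y).toReal := by
    intro y
    rw [twCRPS, integral_eq_lintegral_of_nonneg_ae (f := fun u => (normCDF μ σ u - (Ici y).indicator (fun _ => (1:ℝ)) u) ^ 2) (ae_of_all _ fun u => sq_nonneg _)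
      ((measurable_normCDF.sub
        (measurable_const.indicator measurableSet_Ici)).pow_const 2).aestronglyMeasurable]
    congr 1
    exact gamma1_lintegral t _ (measurable_fker_right y)
  have hI_meas : Measurable I :=
    Measurable.lintegral_prod_right (f := fun y u => fker μ σ y u)
      (ν := volume.restrict (Ici t)) measurable_fker_uncurry
  have hE : etwCRPS (gamma1 t) μ σ = (∫⁻ y, ENNReal.ofReal ((I y).toReal) ∂P).toReal := by
    rw [etwCRPS]
    simp_rw [hT]
    exact integral_eq_lintegral_of_nonneg_ae (ae_of_all _ fun y => ENNReal.toReal_nonneg)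
      hI_meas.ennreal_toReal.aestronglyMeasurable
  have hchain : (∫⁻ y, ENNReal.ofReal ((I y).toReal) ∂P)
      ≤ ENNReal.ofReal (σ / Real.sqrt Real.pi) := by
    calc (∫⁻ y, ENNReal.ofReal ((I y).toReal) ∂P) ≤ ∫⁻ y, I y ∂P :=
          lintegral_mono fun y => ENNReal.ofReal_toReal_le
      _ = ∫⁻ u in Ici t, ∫⁻ y, fker μ σ y u ∂P :=
          lintegral_lintegral_swap measurable_fker_uncurry.aemeasurable
      _ = ∫⁻ u in Ici t, ENNReal.ofReal (normCDF μ σ u * (1 - normCDF μ σ u)) :=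
          lintegral_congr fun u => inner_lintegral hσ u
      _ ≤ ∫⁻ u, ENNReal.ofReal (normCDF μ σ u * (1 - normCDF μ σ u)) :=
          setLIntegral_le_lintegral _ _
      _ = ENNReal.ofReal (∫ u, normCDF μ σ u * (1 - normCDF μ σ u)) :=
          (ofReal_integral_eq_lintegral_ofReal (integrable_normCDF_mul hσ)
            (ae_of_all _ fun u => by
              simp only [Pi.zero_apply]
              nlinarith [normCDF_nonneg (μ := μ) (σ := σ) u,
                normCDF_le_one (μ := μ) (σ := σ) u])).symm
      _ = ENNReal.ofReal (σ / Real.sqrt Real.pi) := by rw [integral_normCDF_mul hσ]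
  rw [hE]
  calc (∫⁻ y, ENNReal.ofReal ((I y).toReal) ∂P).toReal
      ≤ (ENNReal.ofReal (σ / Real.sqrt Real.pi)).toReal :=
        ENNReal.toReal_mono ENNReal.ofReal_ne_top hchain
    _ = σ / Real.sqrt Real.pi := ENNReal.toReal_ofReal (by positivity)

end Stage5

end Lemmata

theorem stmt_17 (μ σ t : ℝ) (hσ : 0 < σ) :
    (0 ≤ etwCRPS (gamma1 t) μ σ ∧ etwCRPS (gamma1 t) μ σ ≤ σ / Real.sqrt Real.pi) ∧
      Filter.Tendsto (fun s => etwCRPS (gamma1 t) μ s) (nhdsWithin 0 (Ioi 0)) (nhds 0) := by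
  refine ⟨⟨etwCRPS_nonneg _, etwCRPS_le hσ⟩, ?_⟩
  have h1 : Filter.Tendsto (fun s : ℝ => s / Real.sqrt Real.pi)
      (nhdsWithin 0 (Ioi 0)) (nhds 0) := by
    have h2 : Filter.Tendsto (fun s : ℝ => s / Real.sqrt Real.pi) (nhds 0)
        (nhds (0 / Real.sqrt Real.pi)) := (continuous_id.div_const _).tendsto 0
    simpa using h2.mono_left nhdsWithin_le_nhds
  refine tendsto_of_tendsto_of_tendsto_of_le_of_le' tendsto_const_nhds h1 ?_ ?_
  · filter_upwards [self_mem_nhdsWithin] with s hs using etwCRPS_nonneg _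
  · filter_upwards [self_mem_nhdsWithin] with s hs using etwCRPS_le hs
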